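/- Let p = ⊞_{i=0}^n c_i ⊙ X^i be a univariate polynomial over TC, and suppose a ∈ TC is such that there exist indices j_1, …, j_m with |c_{j_k} a^{j_k}| all equal for k = 1, …, m, strictly greater than |c_i a^i| for all other nonzero indices i, and -c_0 ∈ ⊞_{k=1}^m c_{j_k} ⊙ a^{j_k}. Then a is a root of p, i.e., 0 ∈ p(a). -/

import Mathlib

open Set
open scoped Classical

/-- The axioms of a (Krasner) hyperfield on a carrier `H`, for a multivalued
addition `add`, multiplication `mul`, additive inverse `neg`, and constants. -/
structure IsHyperfield {H : Type*} (add : H → H → Set H) (mul : H → H → H)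
    (neg : H → H) (zero one : H) : Prop where
  add_nonempty : ∀ x y, (add x y).Nonempty
  hadd_comm : ∀ x y, add x y = add y x
  hadd_assoc : ∀ x y z, (⋃ w ∈ add x y, add w z) = ⋃ w ∈ add y z, add x w
  zero_hadd : ∀ x, add zero x = {x}
  hneg_add : ∀ x, zero ∈ add x (neg x)
  hneg_unique : ∀ x y, zero ∈ add x y → y = neg x
  reversible : ∀ x y z, x ∈ add y z → z ∈ add x (neg y)
  hmul_comm : ∀ x y, mul x y = mul y x
  hmul_assoc : ∀ x y z, mul (mul x y) z = mul x (mul y z)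
  one_hmul : ∀ x, mul one x = x
  zero_hmul : ∀ x, mul zero x = zero
  hdistrib : ∀ a x y, (mul a) '' (add x y) = add (mul a x) (mul a y)
  zero_ne_one : zero ≠ one
  exists_inv : ∀ x, x ≠ zero → ∃ y, mul x y = one

/-- Multivalued hypersum of a list of elements. -/
def hsum {H : Type*} (add : H → H → Set H) (zero : H) : List H → Set H
  | [] => {zero}
  | a :: l => ⋃ b ∈ hsum add zero l, add a b

/-- Powers with respect to a monoid multiplication. -/
def hpow {H : Type*} (mul : H → H → H) (one : H) (a : H) : ℕ → H
  | 0 => one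
  | n + 1 => mul a (hpow mul one a n)

/-- Multivalued evaluation of the univariate polynomial `⊞_{i=0}^n c_i ⊙ X^i` at `a`. -/
def evalPoly {H : Type*} (add : H → H → Set H) (mul : H → H → H) (zero one : H)
    (n : ℕ) (c : ℕ → H) (a : H) : Set H :=
  hsum add zero ((List.range (n + 1)).map fun i => mul (c i) (hpow mul one a i))

/-- Multivalued evaluation of a multivariate polynomial given by a list of
terms (coefficient, exponent vector) at a point `x`. -/
def evalMPoly {H : Type*} (add : H → H → Set H) (mul : H → H → H) (zero one : H)
    {n : ℕ} (terms : List (H × (Fin n → ℕ))) (x : Fin n → H) : Set H :=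
  hsum add zero (terms.map fun t =>
    mul t.1 ((List.ofFn fun j => hpow mul one (x j) (t.2 j)).foldr mul one))

/-- Hyperfield homomorphism axioms. -/
structure IsHyperfieldHom {H1 H2 : Type*}
    (add1 : H1 → H1 → Set H1) (mul1 : H1 → H1 → H1) (zero1 one1 : H1)
    (add2 : H2 → H2 → Set H2) (mul2 : H2 → H2 → H2) (zero2 one2 : H2)
    (f : H1 → H2) : Prop where
  map_zero : f zero1 = zero2
  map_one : f one1 = one2
  map_mul : ∀ x y, f (mul1 x y) = mul2 (f x) (f y)
  map_add : ∀ x y, f '' (add1 x y) ⊆ add2 (f x) (f y)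

/-- `f` is relatively algebraically closed: every root of the coefficientwise
push-forward of a univariate polynomial lifts through `f` to a root. -/
def IsRAC {H1 H2 : Type*}
    (add1 : H1 → H1 → Set H1) (mul1 : H1 → H1 → H1) (zero1 one1 : H1)
    (add2 : H2 → H2 → Set H2) (mul2 : H2 → H2 → H2) (zero2 one2 : H2)
    (f : H1 → H2) : Prop :=
  ∀ (n : ℕ) (c : ℕ → H1) (b : H2),
    zero2 ∈ evalPoly add2 mul2 zero2 one2 n (fun i => f (c i)) b →
    ∃ a : H1, f a = b ∧ zero1 ∈ evalPoly add1 mul1 zero1 one1 n c a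

/-- Tropical hyperaddition on `ℝ ∪ {-∞}`. -/
noncomputable def Tadd (x y : WithBot ℝ) : Set (WithBot ℝ) :=
  if x = y then {z | z ≤ x} else {max x y}

/-- Tropical multiplication: addition of extended reals. -/
noncomputable def Tmul (x y : WithBot ℝ) : WithBot ℝ := x + y

/-- Hyperaddition of the tropical complex hyperfield `TC` on `ℂ`. -/
noncomputable def TCadd (z w : ℂ) : Set ℂ :=
  if w = -z then {c | ‖c‖ ≤ ‖z‖}
  else if ‖w‖ < ‖z‖ then {z}
  else if ‖z‖ < ‖w‖ then {w}
  else {c | ∃ t : ℝ, 0 ≤ t ∧ t ≤ 1 ∧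
    c = ((‖z‖ / ‖(t : ℂ) * z + (1 - (t : ℂ)) * w‖ : ℝ) : ℂ) *
      ((t : ℂ) * z + (1 - (t : ℂ)) * w)}

/-- The homomorphism `η(z) = log |z|` from `TC` to the tropical hyperfield. -/
noncomputable def eta (z : ℂ) : WithBot ℝ :=
  if z = 0 then ⊥ else ((Real.log ‖z‖ : ℝ) : WithBot ℝ)

/-- Hyperaddition of the hyperfield of signs. -/
noncomputable def Sadd (x y : SignType) : Set SignType :=
  if x = 0 then {y} else if y = 0 then {x} else if x = y then {x} else Set.univ

/-- Hyperaddition of the Krasner hyperfield on `Bool` (`false = 0`, `true = 1`). -/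
def Kadd (x y : Bool) : Set Bool :=
  if x = false then {y} else if y = false then {x} else Set.univ

/-- `c ∈ (X ⊞ -a) ⊙ d` : the coefficients `c` arise from multiplying the linear
factor `X ⊞ (-a)` with the polynomial with coefficients `d`. -/
def LinFactor {H : Type*} (add : H → H → Set H) (mul : H → H → H) (zero : H)
    (neg : H → H) (a : H) (c d : ℕ → H) : Prop :=
  ∀ i, c i ∈ add (if i = 0 then zero else d (i - 1)) (mul (neg a) (d i))

/-- `MultGe … a n c k` : the multiplicity of `a` as a root of the degree-`n`
polynomial with coefficients `c` is at least `k` (recursive peeling of linear factors). -/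
def MultGe {H : Type*} (add : H → H → Set H) (mul : H → H → H) (zero one : H)
    (neg : H → H) (a : H) : ℕ → (ℕ → H) → ℕ → Prop
  | _, _, 0 => True
  | n, c, k + 1 => zero ∈ evalPoly add mul zero one n c a ∧
      ∃ d : ℕ → H, (∀ i, n ≤ i → d i = zero) ∧ LinFactor add mul zero neg a c d ∧
        MultGe add mul zero one neg a (n - 1) d k

/-- The multiplicity of `a` as a root. -/
noncomputable def hmult {H : Type*} (add : H → H → Set H) (mul : H → H → H)
    (zero one : H) (neg : H → H) (n : ℕ) (c : ℕ → H) (a : H) : ℕ :=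
  sSup {k | MultGe add mul zero one neg a n c k}

/-- The multiplicity bound: the sum of root multiplicities is at most the degree. -/
def MultBound {H : Type*} (add : H → H → Set H) (mul : H → H → H)
    (zero one : H) (neg : H → H) : Prop :=
  ∀ (n : ℕ) (c : ℕ → H), c n ≠ zero →
    ∀ S : Finset H, (S.sum fun a => hmult add mul zero one neg n c a) ≤ n

/-- The multiplicity equality: the sum of root multiplicities equals the degree. -/
def MultEq {H : Type*} (add : H → H → Set H) (mul : H → H → H)
    (zero one : H) (neg : H → H) : Prop :=
  MultBound add mul zero one neg ∧
    ∀ (n : ℕ) (c : ℕ → H), c n ≠ zero →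
      ∃ S : Finset H, (S.sum fun a => hmult add mul zero one neg n c a) = n

/-- Iterated splitting off of a list of linear factors: `c ∈ (X ⊞ -a₁) ⊙ ⋯ ⊙ (X ⊞ -aₘ) ⊙ d`. -/
def MultiLinFactor {H : Type*} (add : H → H → Set H) (mul : H → H → H) (zero : H)
    (neg : H → H) : List H → (ℕ → H) → (ℕ → H) → Prop
  | [], c, d => c = d
  | a :: l, c, d => ∃ e : ℕ → H, LinFactor add mul zero neg a c e ∧
      MultiLinFactor add mul zero neg l e d

/-- The inheritance property: any sub-multiset of the multiset of roots (with
multiplicity) of size at most the degree can be split off as linear factors. -/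
def Inheritance {H : Type*} (add : H → H → Set H) (mul : H → H → H)
    (zero one : H) (neg : H → H) : Prop :=
  ∀ (n : ℕ) (c : ℕ → H), c n ≠ zero →
    ∀ l : List H, l.length ≤ n →
      (∀ a : H, (l.filter fun x => x = a).length ≤ hmult add mul zero one neg n c a) →
      ∃ q : ℕ → H, MultiLinFactor add mul zero neg l c q

/-!
Write `p(a) = c₀ ⊞ (⊞_{i ≥ 1} cᵢ aⁱ)`. Over `TC`, a hypersum of terms of modulus at most `R`, at
least one of modulus exactly `R`, contains the hypersum of its terms of modulus `R`: a smaller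
term `t` is absorbed by every partial sum of modulus larger than `‖t‖`, while a partial sum of
modulus at most `‖t‖ < R` can only come from a cancellation among the terms of modulus `R`, in
which case every point of the closed disc of radius `R` is attained, in particular `-t`, and
`t ⊞ -t` is the closed disc of radius `‖t‖`. Hence `-c₀` lies in the hypersum of the
nonconstant monomials, and `0 ∈ c₀ ⊞ -c₀`.
-/

lemma arc_ne_zero {z w : ℂ} (hzw : ‖z‖ = ‖w‖) (hw : w ≠ -z) {t : ℝ} (ht0 : 0 ≤ t)
    (ht1 : t ≤ 1) : (t : ℂ) * z + (1 - t) * w ≠ 0 := by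
  intro hv
  have hz : z ≠ 0 := by
    rintro rfl
    exact hw (by simpa using hzw.symm)
  have hnorm : t * ‖z‖ = (1 - t) * ‖z‖ := by
    have := congrArg (‖·‖) (eq_neg_of_add_eq_zero_left hv)
    simp only [norm_neg, norm_mul, ← hzw] at this
    rwa [show (1 - (t : ℂ)) = ((1 - t : ℝ) : ℂ) by push_cast; ring, Complex.norm_real,
      Complex.norm_real, Real.norm_of_nonneg ht0, Real.norm_of_nonneg (by linarith)] at this
  have ht : t = 1 / 2 := by
    have := norm_pos_iff.2 hz
    nlinarith
  apply hw
  rw [ht] at hv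
  push_cast at hv
  linear_combination 2 * hv

lemma norm_eq_max_of_mem_TCadd {z w y : ℂ} (hw : w ≠ -z) (hy : y ∈ TCadd z w) :
    ‖y‖ = max ‖z‖ ‖w‖ := by
  unfold TCadd at hy
  rw [if_neg hw] at hy
  split_ifs at hy with hwz hzw
  · rw [hy, max_eq_left hwz.le]
  · rw [hy, max_eq_right hzw.le]
  · have heq : ‖z‖ = ‖w‖ := le_antisymm (not_lt.1 hwz) (not_lt.1 hzw)
    obtain ⟨t, ht0, ht1, rfl⟩ := hy
    rw [← heq, max_self, norm_mul, Complex.norm_real, Real.norm_of_nonneg (by positivity),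
      div_mul_cancel₀ _ (norm_ne_zero_iff.2 (arc_ne_zero heq hw ht0 ht1))]

lemma norm_le_max_of_mem_TCadd {z w y : ℂ} (hy : y ∈ TCadd z w) : ‖y‖ ≤ max ‖z‖ ‖w‖ := by
  by_cases hw : w = -z
  · rw [TCadd, if_pos hw] at hy
    exact le_max_of_le_left hy
  · exact (norm_eq_max_of_mem_TCadd hw hy).le

lemma eq_neg_of_mem_TCadd_of_norm_lt {z w y : ℂ} (hy : y ∈ TCadd z w)
    (hlt : ‖y‖ < max ‖z‖ ‖w‖) : w = -z := by
  by_contra hw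
  exact hlt.ne (norm_eq_max_of_mem_TCadd hw hy)

lemma mem_TCadd_neg {z u : ℂ} (hu : ‖u‖ ≤ ‖z‖) : u ∈ TCadd z (-z) := by
  rw [TCadd, if_pos rfl]
  exact hu

lemma mem_TCadd_left {z w : ℂ} (hwz : ‖w‖ ≤ ‖z‖) : z ∈ TCadd z w := by
  by_cases hw : w = -z
  · exact hw ▸ mem_TCadd_neg le_rfl
  unfold TCadd
  rw [if_neg hw]
  split_ifs with h₁ h₂
  · rfl
  · exact absurd h₂ (not_lt.2 hwz)
  · have hz : z ≠ 0 := by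
      rintro rfl
      exact hw (by simpa using hwz)
    refine ⟨1, zero_le_one, le_rfl, ?_⟩
    simp [hz]

lemma mem_TCadd_right {z w : ℂ} (hzw : ‖z‖ < ‖w‖) : w ∈ TCadd z w := by
  have hw : w ≠ -z := by
    rintro rfl
    simp at hzw
  rw [TCadd, if_neg hw, if_neg (not_lt.2 hzw.le), if_pos hzw]
  rfl

lemma TCadd_zero_right (z : ℂ) : TCadd z 0 = {z} := by
  ext y
  by_cases hz : z = 0
  · subst hz
    simp [TCadd]
  · rw [TCadd, if_neg (by simpa [eq_comm] using hz), if_pos (by simpa using hz)]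

lemma TCadd_nonempty (z w : ℂ) : (TCadd z w).Nonempty := by
  rcases le_or_gt ‖w‖ ‖z‖ with h | h
  · exact ⟨z, mem_TCadd_left h⟩
  · exact ⟨w, mem_TCadd_right h⟩

section hsum

variable {H : Type*} {add : H → H → Set H} {zero : H}

lemma mem_hsum_cons {x t : H} {L : List H} :
    x ∈ hsum add zero (t :: L) ↔ ∃ b ∈ hsum add zero L, x ∈ add t b := by
  simp [hsum]

lemma hsum_nonempty (hadd : ∀ x y, (add x y).Nonempty) :
    ∀ L : List H, (hsum add zero L).Nonempty
  | [] => ⟨zero, rfl⟩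
  | t :: L => by
    obtain ⟨b, hb⟩ := hsum_nonempty hadd L
    obtain ⟨y, hy⟩ := hadd t b
    exact ⟨y, mem_hsum_cons.2 ⟨b, hb, hy⟩⟩

end hsum

lemma hpow_eq_pow {M : Type*} [Monoid M] (a : M) (i : ℕ) : hpow (· * ·) 1 a i = a ^ i := by
  induction i with
  | zero => rw [hpow, pow_zero]
  | succ k ih => rw [hpow, ih, pow_succ']

lemma evalPoly_eq_hsum {H : Type*} [Monoid H] (add : H → H → Set H) (zero : H) (n : ℕ)
    (c : ℕ → H) (a : H) :
    evalPoly add (· * ·) zero 1 n c a =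
      hsum add zero ((List.range (n + 1)).map fun i => c i * a ^ i) := by
  simp only [evalPoly, hpow_eq_pow]

lemma norm_le_of_mem_hsum_TCadd {R : ℝ} (hR : 0 ≤ R) :
    ∀ L : List ℂ, (∀ s ∈ L, ‖s‖ ≤ R) → ∀ y ∈ hsum TCadd 0 L, ‖y‖ ≤ R
  | [], _, y, hy => by
    rw [show y = 0 from hy, norm_zero]
    exact hR
  | t :: L, hL, y, hy => by
    obtain ⟨b, hb, hy⟩ := mem_hsum_cons.1 hy
    have hbR :=
      norm_le_of_mem_hsum_TCadd hR L (fun s hs => hL s (List.mem_cons_of_mem _ hs)) b hb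
    exact (norm_le_max_of_mem_TCadd hy).trans (max_le (hL t List.mem_cons_self) hbR)

lemma closedBall_subset_hsum_TCadd_cons {R : ℝ} {t : ℂ} {L : List ℂ} (ht : ‖t‖ = R)
    (hL : ∀ s ∈ L, ‖s‖ ≤ R) {x : ℂ} (hx : x ∈ hsum TCadd 0 (t :: L)) (hxR : ‖x‖ < R) :
    Metric.closedBall 0 R ⊆ hsum TCadd 0 (t :: L) := by
  intro u hu
  rw [mem_closedBall_zero_iff] at hu
  obtain ⟨b, hb, hx⟩ := mem_hsum_cons.1 hx
  have hbR := norm_le_of_mem_hsum_TCadd (ht ▸ norm_nonneg t) L hL b hb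
  obtain rfl : b = -t :=
    eq_neg_of_mem_TCadd_of_norm_lt hx (by rwa [max_eq_left (ht ▸ hbR), ht])
  exact mem_hsum_cons.2 ⟨-t, hb, mem_TCadd_neg (ht ▸ hu)⟩

lemma hsum_TCadd_filter_norm_eq_subset (R : ℝ) :
    ∀ L : List ℂ, (∀ s ∈ L, ‖s‖ ≤ R) → L.filter (‖·‖ = R) ≠ [] →
      hsum TCadd 0 (L.filter (‖·‖ = R)) ⊆ hsum TCadd 0 L
  | [], _, hne => absurd rfl hne
  | t :: L, hL, hne => by
    have hL' : ∀ s ∈ L, ‖s‖ ≤ R := fun s hs => hL s (List.mem_cons_of_mem _ hs)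
    intro x hx
    rcases (hL t List.mem_cons_self).eq_or_lt with htR | htR
    · rw [List.filter_cons_of_pos (by simpa using htR)] at hx
      obtain ⟨b, hb, hxb⟩ := mem_hsum_cons.1 hx
      by_cases hF : L.filter (‖·‖ = R) = []
      · rw [hF] at hb
        obtain rfl : b = 0 := hb
        obtain rfl : x = t := by rwa [TCadd_zero_right] at hxb
        obtain ⟨b', hb'⟩ := hsum_nonempty (zero := 0) TCadd_nonempty L
        have hb'R := norm_le_of_mem_hsum_TCadd (htR ▸ norm_nonneg x) L hL' b' hb'
        exact mem_hsum_cons.2 ⟨b', hb', mem_TCadd_left (htR ▸ hb'R)⟩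
      · exact mem_hsum_cons.2 ⟨b, hsum_TCadd_filter_norm_eq_subset R L hL' hF hb, hxb⟩
    · rw [List.filter_cons_of_neg (by simpa using htR.ne)] at hx hne
      have IH := hsum_TCadd_filter_norm_eq_subset R L hL' hne
      rcases lt_or_ge ‖t‖ ‖x‖ with htx | hxt
      · exact mem_hsum_cons.2 ⟨x, IH hx, mem_TCadd_right htx⟩
      obtain ⟨f, F, hfF⟩ := List.exists_cons_of_ne_nil hne
      have hfFR : ∀ s ∈ f :: F, ‖s‖ = R := by
        rw [← hfF]
        exact fun s hs => of_decide_eq_true (List.mem_filter.1 hs).2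
      rw [hfF] at hx IH
      have hnegt : -t ∈ hsum TCadd 0 (f :: F) :=
        closedBall_subset_hsum_TCadd_cons (hfFR f List.mem_cons_self)
          (fun s hs => (hfFR s (List.mem_cons_of_mem _ hs)).le) hx (hxt.trans_lt htR)
          (mem_closedBall_zero_iff.2 (by rw [norm_neg]; exact htR.le))
      exact mem_hsum_cons.2 ⟨-t, IH hnegt, mem_TCadd_neg hxt⟩

lemma List.filter_mem_range'_eq_sort {J : Finset ℕ} {m n : ℕ}
    (hJ : ∀ j ∈ J, m ≤ j ∧ j < m + n) :
    (List.range' m n).filter (· ∈ J) = J.sort (· ≤ ·) :=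
  ((List.pairwise_lt_range' (s := m) (n := n)).filter _).eq_of_mem_iff
    J.sortedLT_sort.pairwise fun j => by
      simp only [List.mem_filter, List.mem_range'_1, decide_eq_true_eq, Finset.mem_sort]
      exact ⟨And.right, fun hj => ⟨hJ j hj, hj⟩⟩

/-- If the monomials of maximal modulus at `a` are indexed by a
nonempty set `J` of nonzero indices, all of common modulus `R` strictly larger
than the modulus of every other nonzero-index monomial, and `-c₀` lies in the
hypersum of those maximal monomials, then `a` is a root of `p` over `TC`. -/
theorem TC_root_of_dominant_terms (n : ℕ) (c : ℕ → ℂ) (a : ℂ)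
    (J : Finset ℕ) (hJne : J.Nonempty) (hJ : ∀ j ∈ J, 1 ≤ j ∧ j ≤ n) (R : ℝ)
    (hR : ∀ j ∈ J, ‖c j * a ^ j‖ = R)
    (hlt : ∀ i, 1 ≤ i → i ≤ n → i ∉ J → ‖c i * a ^ i‖ < R)
    (hc0 : -c 0 ∈ hsum TCadd 0 ((J.sort (· ≤ ·)).map fun j => c j * a ^ j)) :
    (0 : ℂ) ∈ evalPoly TCadd (· * ·) 0 1 n c a := by
  set g : ℕ → ℂ := fun i => c i * a ^ i
  have hnorm : ∀ i ∈ List.range' 1 n, ‖g i‖ = R ∧ i ∈ J ∨ ‖g i‖ < R ∧ i ∉ J := by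
    intro i hi
    rw [List.mem_range'_1] at hi
    by_cases hiJ : i ∈ J
    · exact Or.inl ⟨hR i hiJ, hiJ⟩
    · exact Or.inr ⟨hlt i hi.1 (by omega) hiJ, hiJ⟩
  have hfilter : ((List.range' 1 n).map g).filter (‖·‖ = R) = (J.sort (· ≤ ·)).map g := by
    rw [List.filter_map, ← List.filter_mem_range'_eq_sort (m := 1) (n := n)
      fun j hj => (hJ j hj).imp_right Nat.lt_one_add_iff.2]
    congr 1
    refine List.filter_congr fun i hi => ?_
    rcases hnorm i hi with ⟨hiR, hiJ⟩ | ⟨hiR, hiJ⟩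
    · simp [hiR, hiJ]
    · simp [hiR.ne, hiJ]
  have hle : ∀ s ∈ (List.range' 1 n).map g, ‖s‖ ≤ R := by
    rw [List.forall_mem_map]
    exact fun i hi => (hnorm i hi).elim (·.1.le) (·.1.le)
  have hne : ((List.range' 1 n).map g).filter (‖·‖ = R) ≠ [] := by
    rw [hfilter]
    exact List.ne_nil_of_length_pos (by simpa using hJne.card_pos)
  have htail : -c 0 ∈ hsum TCadd 0 ((List.range' 1 n).map g) :=
    hsum_TCadd_filter_norm_eq_subset R _ hle hne (hfilter ▸ hc0)
  rw [evalPoly_eq_hsum, List.range_eq_range', List.range'_succ, List.map_cons]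
  refine mem_hsum_cons.2 ⟨-c 0, htail, ?_⟩
  simpa using mem_TCadd_neg (z := c 0) (u := 0) (by simp)
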